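/- arXiv:1710.03517 — 2 statements merged into one kernel-verified Lean document; each statement's English description precedes it below -/
import Mathlib

section
/- For every natural number n ≥ 2, the n-th group homology of the additive group of rational numbers ℚ with coefficients in the integers ℤ equipped with the trivial ℚ-action vanishes, i.e. Hₙ(Bℚ; ℤ) = 0 for all n ≥ 2. -/
open CategoryTheory CategoryTheory.Limits

noncomputable section

/-- The augmentation ring homomorphism `ℤ[G] → ℤ` of the integral group ring of an
additive abelian group `G`, sending each group element to `1`. -/
def augmentationℤ (G : Type) [AddCommGroup G] : AddMonoidAlgebra ℤ G →+* ℤ :=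
  ((AddMonoidAlgebra.lift ℤ ℤ G) 1).toRingHom

/-- An abelian group `A`, viewed as a module over the integral group ring `ℤ[G]` via the
augmentation, i.e. with the trivial `G`-action. -/
def trivialModule (G : Type) [AddCommGroup G] (A : Type) [AddCommGroup A] :
    Module (AddMonoidAlgebra ℤ G) A :=
  Module.compHom A (augmentationℤ G)

/-- The `n`-th group homology `Hₙ(BG; A)` of an additive abelian group `G` with coefficients
in an abelian group `A` equipped with the trivial `G`-action, defined as
`Torₙ^{ℤ[G]}(ℤ, A)`, where both `ℤ` and `A` carry the trivial `G`-action (i.e. the module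
structure induced by the augmentation `ℤ[G] → ℤ`). -/
def groupHomologyTriv (G : Type) [AddCommGroup G] (A : Type) [AddCommGroup A] (n : ℕ) :
    ModuleCat (AddMonoidAlgebra ℤ G) :=
  letI := trivialModule G ℤ
  letI := trivialModule G A
  ((Tor (ModuleCat (AddMonoidAlgebra ℤ G)) n).obj
      (ModuleCat.of (AddMonoidAlgebra ℤ G) ℤ)).obj (ModuleCat.of (AddMonoidAlgebra ℤ G) A)

/-!
`ℚ` is the increasing union of the cyclic groups generated by the `1/n!`, and in `ℤ[ℚ]` the
geometric sum `σₙ = ∑_{i ≤ n} [1/(n+1)!]^i` satisfies `[1/n!] - 1 = σₙ ([1/(n+1)!] - 1)`.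
Splicing the length-one resolutions of these cyclic groups gives the free resolution
`0 → ⊕ₙ ℤ[ℚ] → ⊕ₙ ℤ[ℚ] → ℤ[ℚ] → ℤ → 0`,  `eₙ ↦ eₙ - σₙ eₙ₊₁`,  `eₙ ↦ [1/n!] - 1`
of the trivial module; exactness in the middle uses that `ℤ[ℚ]` is a domain. A map
`eₙ ↦ eₙ - sₙ eₙ₊₁` is injective on `⊕ₙ M` for every module `M` (compare coefficients degree by
degree), so the left-hand differential stays injective after tensoring with any `X`, and
`Torₙ(X, ℤ) = 0` for `n ≥ 2`.
-/

namespace Finsupp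

section Telescope

variable {R M : Type*} [CommRing R] [AddCommGroup M] [Module R M] (s : ℕ → R)

def telescope : (ℕ →₀ M) →ₗ[R] (ℕ →₀ M) :=
  lsum R fun n => lsingle n - lsingle (n + 1) ∘ₗ (s n • LinearMap.id)

@[simp]
lemma telescope_single (n : ℕ) (m : M) :
    telescope s (single n m) = single n m - single (n + 1) (s n • m) := by
  simp [telescope]

lemma telescope_apply_zero (v : ℕ →₀ M) : telescope s v 0 = v 0 := by
  induction v using Finsupp.induction_linear with
  | zero => simp
  | add v w hv hw => simp [hv, hw]
  | single n m => simp [single_apply]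

lemma telescope_apply_succ (v : ℕ →₀ M) (n : ℕ) :
    telescope s v (n + 1) = v (n + 1) - s n • v n := by
  induction v using Finsupp.induction_linear with
  | zero => simp
  | add v w hv hw => simp only [map_add, add_apply, hv, hw, smul_add]; abel
  | single k m => by_cases h : k = n <;> simp [single_apply, h]

lemma telescope_injective : Function.Injective (telescope (M := M) s) := by
  refine (injective_iff_map_eq_zero _).2 fun v hv => ext fun n => ?_
  induction n with
  | zero => rw [← telescope_apply_zero s, hv]
  | succ n ih =>
    have h := telescope_apply_succ s v n
    rw [hv, ih] at h
    simpa [sub_eq_zero, eq_comm] using h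

lemma lTensor_telescope_injective (N : Type*) [AddCommGroup N] [Module R N] :
    Function.Injective (LinearMap.lTensor N (telescope (M := R) s)) := by
  let e := TensorProduct.finsuppScalarRight R R N ℕ
  have conj : LinearMap.lTensor N (telescope s) =
      e.symm.toLinearMap ∘ₗ telescope s ∘ₗ e.toLinearMap := by
    ext n m : 4
    simp [e, TensorProduct.tmul_sub, TensorProduct.finsuppScalarRight_apply_tmul,
      TensorProduct.smul_tmul]
  rw [conj]
  exact e.symm.injective.comp ((telescope_injective s).comp e.injective)

open Filter in
lemma eventually_exists_sub_single_mem_range_telescope (v : ℕ →₀ M) :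
    ∀ᶠ N in atTop, ∃ c : M, v - single N c ∈ LinearMap.range (telescope s) := by
  induction v using Finsupp.induction_linear with
  | zero => exact .of_forall fun N => ⟨0, by simp⟩
  | add v w hv hw =>
    filter_upwards [hv, hw] with N ⟨c, hc⟩ ⟨c', hc'⟩
    refine ⟨c + c', ?_⟩
    convert add_mem hc hc' using 1
    rw [single_add]; abel
  | single n m =>
    filter_upwards [eventually_ge_atTop n] with N hN
    induction N, hN using Nat.le_induction with
    | base => exact ⟨m, by simp⟩
    | succ N _ ih =>
      obtain ⟨c, hc⟩ := ih
      refine ⟨s N • c, ?_⟩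
      convert add_mem hc (LinearMap.mem_range_self (telescope s) (single N c)) using 1
      rw [telescope_single]; abel

end Telescope

variable {R : Type*} [CommRing R] {a s : ℕ → R}

lemma linearCombination_comp_telescope (h : ∀ n, a n = s n * a (n + 1)) :
    linearCombination R a ∘ₗ telescope s = 0 := by
  ext n
  simp [h n]

lemma range_telescope_eq_ker_linearCombination (h : ∀ n, a n = s n * a (n + 1))
    (ha : ∀ n, a n ∈ nonZeroDivisors R) :
    LinearMap.range (telescope s) = LinearMap.ker (linearCombination R a) := by
  refine le_antisymm (LinearMap.range_le_ker_iff.2 (linearCombination_comp_telescope h)) ?_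
  intro v hv
  obtain ⟨N, c, hc⟩ := (eventually_exists_sub_single_mem_range_telescope s v).exists
  have hcN : c * a N = 0 := by
    obtain ⟨w, hw⟩ := hc
    simpa [← LinearMap.comp_apply, linearCombination_comp_telescope h, LinearMap.mem_ker.1 hv]
      using congr(linearCombination R a $hw).symm
  rwa [(mul_right_mem_nonZeroDivisors_eq_zero_iff (ha N)).1 hcN, single_zero, sub_zero] at hc

end Finsupp

namespace ChainComplex

open ZeroObject Category

variable {C : Type*} [Category C] [Abelian C] {P₀ P₁ P₂ : C}

def ofLengthTwo (f : P₂ ⟶ P₁) (g : P₁ ⟶ P₀) (hfg : f ≫ g = 0) : ChainComplex C ℕ :=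
  of (fun | 0 => P₀ | 1 => P₁ | 2 => P₂ | _ + 3 => 0)
    (fun | 0 => g | 1 => f | _ + 2 => 0)
    (fun | 0 => hfg | _ + 1 => zero_comp)

variable (f : P₂ ⟶ P₁) (g : P₁ ⟶ P₀) (hfg : f ≫ g = 0)

@[simp]
lemma ofLengthTwo_d_one_zero : (ofLengthTwo f g hfg).d 1 0 = g := by
  change ite (1 = 0 + 1) (𝟙 P₁ ≫ g) 0 = g
  rw [if_pos rfl, id_comp]

@[simp]
lemma ofLengthTwo_d_two_one : (ofLengthTwo f g hfg).d 2 1 = f := by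
  change ite (2 = 1 + 1) (𝟙 P₂ ≫ f) 0 = f
  rw [if_pos rfl, id_comp]

lemma ofLengthTwo_exactAt_succ [Mono f] (hfg_exact : (ShortComplex.mk f g hfg).Exact) (n : ℕ) :
    (ofLengthTwo f g hfg).ExactAt (n + 1) := by
  rw [HomologicalComplex.exactAt_iff' _ (n + 2) (n + 1) n (by simp) (by simp)]
  match n with
  | 0 =>
    refine ShortComplex.exact_of_iso ?_ hfg_exact
    exact ShortComplex.isoMk (Iso.refl _) (Iso.refl _) (Iso.refl _)
      ((id_comp _).trans ((ofLengthTwo_d_two_one f g hfg).trans (comp_id f).symm))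
      ((id_comp _).trans ((ofLengthTwo_d_one_zero f g hfg).trans (comp_id g).symm))
  | 1 =>
    refine (ShortComplex.exact_iff_mono _ ((isZero_zero C).eq_of_src _ _)).2 ?_
    change Mono ((ofLengthTwo f g hfg).d 2 1)
    rw [ofLengthTwo_d_two_one]
    exact ‹Mono f›
  | _ + 2 => exact ShortComplex.exact_of_isZero_X₂ _ (isZero_zero C)

lemma ofLengthTwo_map_exactAt {D : Type*} [Category D] [Abelian D] (F : C ⥤ D) [F.Additive]
    [Mono (F.map f)] (n : ℕ) :
    ((F.mapHomologicalComplex _).obj (ofLengthTwo f g hfg)).ExactAt (n + 2) := by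
  rw [HomologicalComplex.exactAt_iff' _ (n + 3) (n + 2) (n + 1) (by simp) (by simp)]
  match n with
  | 0 =>
    refine (ShortComplex.exact_iff_mono _ ((F.map_isZero (isZero_zero C)).eq_of_src _ _)).2 ?_
    change Mono (F.map ((ofLengthTwo f g hfg).d 2 1))
    rw [ofLengthTwo_d_two_one]
    exact ‹Mono (F.map f)›
  | _ + 1 => exact ShortComplex.exact_of_isZero_X₂ _ (F.map_isZero (isZero_zero C))

end ChainComplex

namespace CategoryTheory.ProjectiveResolution

open ZeroObject Category

variable {C : Type*} [Category C] [Abelian C] {Y P₀ P₁ P₂ : C}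

def ofLengthTwo [Projective P₀] [Projective P₁] [Projective P₂]
    (f : P₂ ⟶ P₁) [Mono f] (g : P₁ ⟶ P₀) (π : P₀ ⟶ Y) [Epi π] (hfg : f ≫ g = 0)
    (hgπ : g ≫ π = 0) (hfg_exact : (ShortComplex.mk f g hfg).Exact)
    (hgπ_exact : (ShortComplex.mk g π hgπ).Exact) : ProjectiveResolution Y where
  complex := ChainComplex.ofLengthTwo f g hfg
  projective
    | 0 => ‹Projective P₀›
    | 1 => ‹Projective P₁›
    | 2 => ‹Projective P₂›
    | _ + 3 => show Projective (0 : C) from inferInstance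
  π := (ChainComplex.toSingle₀Equiv _ Y).symm
    ⟨π, by rw [ChainComplex.ofLengthTwo_d_one_zero]; exact hgπ⟩
  quasiIso := ⟨fun
    | 0 => by
      rw [ChainComplex.quasiIsoAt₀_iff, ShortComplex.quasiIso_iff_of_zeros' _ rfl rfl rfl]
      refine (ShortComplex.exact_and_epi_g_iff_of_iso ?_).2 ⟨hgπ_exact, ‹Epi π›⟩
      exact ShortComplex.isoMk (Iso.refl _) (Iso.refl _) (Iso.refl _)
        ((id_comp g).trans ((ChainComplex.ofLengthTwo_d_one_zero f g hfg).symm.trans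
          (comp_id _).symm))
        ((id_comp π).trans ((ChainComplex.toSingle₀Equiv_symm_apply_f_zero
          (C := ChainComplex.ofLengthTwo f g hfg) π _).symm.trans (comp_id _).symm))
    | n + 1 => by
      rw [quasiIsoAt_iff_exactAt' (hL := ChainComplex.exactAt_succ_single_obj ..)]
      exact ChainComplex.ofLengthTwo_exactAt_succ f g hfg hfg_exact n⟩

end CategoryTheory.ProjectiveResolution

open AddMonoidAlgebra

lemma AddMonoidAlgebra.single_zsmul_sub_one_mem {k G : Type*} [CommRing k] [AddCommGroup G]
    {I : Ideal k[G]} {g : G} (hg : single g 1 - 1 ∈ I) (m : ℤ) : single (m • g) 1 - 1 ∈ I := by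
  let φ : Multiplicative G →* k[G] ⧸ I := (Ideal.Quotient.mk I : k[G] →* k[G] ⧸ I).comp (of k G)
  have mem_ker (x : G) : single x 1 - 1 ∈ I ↔ Multiplicative.ofAdd x ∈ φ.ker := by
    simp [φ, MonoidHom.mem_ker, ← map_one (Ideal.Quotient.mk I), Ideal.Quotient.eq, one_def]
  rw [mem_ker, ofAdd_zsmul]
  exact zpow_mem ((mem_ker g).1 hg) m

section Augmentation

variable {G : Type} [AddCommGroup G]

@[simp]
lemma augmentationℤ_single (g : G) (c : ℤ) : augmentationℤ G (single g c) = c := by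
  simp [augmentationℤ, lift_single]

lemma ker_augmentationℤ_le {I : Ideal ℤ[G]} (hI : ∀ g, single g 1 - 1 ∈ I) :
    RingHom.ker (augmentationℤ G) ≤ I := by
  have sub_augmentation_mem (r : ℤ[G]) : r - single 0 (augmentationℤ G r) ∈ I := by
    induction r using AddMonoidAlgebra.induction_linear with
    | zero => simp
    | add r r' hr hr' =>
      convert add_mem hr hr' using 1
      rw [map_add, single_add]; abel
    | single g c =>
      convert I.smul_of_tower_mem c (hI g) using 1
      simp [smul_sub, one_def]
  intro r hr
  simpa [RingHom.mem_ker.1 hr] using sub_augmentation_mem r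

variable (G) in
def trivialModuleCat (A : Type) [AddCommGroup A] : ModuleCat ℤ[G] :=
  letI := trivialModule G A
  ModuleCat.of ℤ[G] A

variable (G) in
def augmentationHom : ModuleCat.of ℤ[G] ℤ[G] ⟶ trivialModuleCat G ℤ :=
  letI := trivialModule G ℤ
  ModuleCat.ofHom
    { toFun := augmentationℤ G
      map_add' := map_add _
      map_smul' := map_mul _ }

instance : Epi (augmentationHom G) :=
  (ModuleCat.epi_iff_surjective _).2 fun z => ⟨single 0 z, augmentationℤ_single 0 z⟩

end Augmentation

open scoped Nat

def ofInvFactorial (n : ℕ) : ℤ[ℚ] := single (n ! : ℚ)⁻¹ 1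

def ofInvFactorialGeomSum (n : ℕ) : ℤ[ℚ] :=
  ∑ i ∈ Finset.range (n + 1), ofInvFactorial (n + 1) ^ i

lemma ofInvFactorial_succ_pow (n : ℕ) : ofInvFactorial (n + 1) ^ (n + 1) = ofInvFactorial n := by
  simp [ofInvFactorial, single_pow, Nat.factorial_succ]
  field_simp

lemma ofInvFactorial_sub_one_eq_mul (n : ℕ) :
    ofInvFactorial n - 1 = ofInvFactorialGeomSum n * (ofInvFactorial (n + 1) - 1) := by
  rw [ofInvFactorialGeomSum, geom_sum_mul, ofInvFactorial_succ_pow]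

lemma ofInvFactorial_sub_one_ne_zero (n : ℕ) : ofInvFactorial n - 1 ≠ 0 := by
  rw [sub_ne_zero, one_def, ofInvFactorial, Ne, single_left_inj one_ne_zero]
  positivity

lemma ker_augmentationℤ_rat :
    RingHom.ker (augmentationℤ ℚ) = Ideal.span (Set.range fun n => ofInvFactorial n - 1) := by
  refine le_antisymm (ker_augmentationℤ_le fun a => ?_) (Ideal.span_le.2 ?_)
  · have ha : (a.num * (a.den - 1)! : ℤ) • ((a.den)! : ℚ)⁻¹ = a := by
      rw [zsmul_eq_mul, ← Nat.mul_factorial_pred a.den_ne_zero]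
      push_cast
      field_simp
      exact (Rat.den_mul_eq_num a).symm
    rw [← ha]
    exact single_zsmul_sub_one_mem (Ideal.subset_span (Set.mem_range_self a.den)) _
  · rintro _ ⟨n, rfl⟩
    simp [ofInvFactorial]

def ratResolutionD₁ : ModuleCat.of ℤ[ℚ] (ℕ →₀ ℤ[ℚ]) ⟶ ModuleCat.of ℤ[ℚ] ℤ[ℚ] :=
  ModuleCat.ofHom (Finsupp.linearCombination ℤ[ℚ] fun n => ofInvFactorial n - 1)

def ratResolutionD₂ : ModuleCat.of ℤ[ℚ] (ℕ →₀ ℤ[ℚ]) ⟶ ModuleCat.of ℤ[ℚ] (ℕ →₀ ℤ[ℚ]) :=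
  ModuleCat.ofHom (Finsupp.telescope ofInvFactorialGeomSum)

lemma ratResolutionD₂_comp_D₁ : ratResolutionD₂ ≫ ratResolutionD₁ = 0 :=
  ModuleCat.hom_ext (Finsupp.linearCombination_comp_telescope ofInvFactorial_sub_one_eq_mul)

instance : Mono ratResolutionD₂ :=
  (ModuleCat.mono_iff_injective _).2 (Finsupp.telescope_injective _)

lemma range_ratResolutionD₂ :
    LinearMap.range ratResolutionD₂.hom = LinearMap.ker ratResolutionD₁.hom :=
  Finsupp.range_telescope_eq_ker_linearCombination ofInvFactorial_sub_one_eq_mul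
    fun n => mem_nonZeroDivisors_of_ne_zero (ofInvFactorial_sub_one_ne_zero n)

lemma range_ratResolutionD₁ :
    LinearMap.range ratResolutionD₁.hom = LinearMap.ker (augmentationHom ℚ).hom := by
  rw [ratResolutionD₁, ModuleCat.hom_ofHom, Finsupp.range_linearCombination]
  exact ker_augmentationℤ_rat.symm.trans (SetLike.ext fun _ => Iff.rfl)

def ratAugmentationResolution : ProjectiveResolution (trivialModuleCat ℚ ℤ) :=
  ProjectiveResolution.ofLengthTwo ratResolutionD₂ ratResolutionD₁ (augmentationHom ℚ)
    ratResolutionD₂_comp_D₁ _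
    (ShortComplex.Exact.moduleCat_of_range_eq_ker _ _ range_ratResolutionD₂)
    (ShortComplex.Exact.moduleCat_of_range_eq_ker _ _ range_ratResolutionD₁)

theorem isZero_Tor_trivialModuleCat_rat (X : ModuleCat ℤ[ℚ]) {n : ℕ} (hn : 2 ≤ n) :
    IsZero (((Tor (ModuleCat ℤ[ℚ]) n).obj X).obj (trivialModuleCat ℚ ℤ)) := by
  obtain ⟨n, rfl⟩ := Nat.exists_eq_add_of_le' hn
  have : Mono (((MonoidalCategory.tensoringLeft _).obj X).map ratResolutionD₂) :=
    (ModuleCat.mono_iff_injective _).2 (Finsupp.lTensor_telescope_injective _ X)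
  exact (ChainComplex.ofLengthTwo_map_exactAt ratResolutionD₂ ratResolutionD₁
    ratResolutionD₂_comp_D₁ ((MonoidalCategory.tensoringLeft _).obj X) n).isZero_homology.of_iso
    (ratAugmentationResolution.isoLeftDerivedObj _ _)

/-- For every `n ≥ 2`, the `n`-th group homology of the additive group `ℚ` with
coefficients in `ℤ` (trivial action) vanishes: `Hₙ(Bℚ; ℤ) = 0`. -/
theorem Hn_BQ_Z_isZero : ∀ n : ℕ, 2 ≤ n → IsZero (groupHomologyTriv ℚ ℤ n) :=
  fun _ hn => isZero_Tor_trivialModuleCat_rat _ hn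
end
end

section
/- Let R = 𝔽₂[ℚ] be the group algebra of the additive group ℚ over the field 𝔽₂ with two elements, and let I = ker(ε) be the augmentation ideal, where ε : R → 𝔽₂ is the augmentation map. Then the augmentation ideal is idempotent: I² = I. -/
/-!
Every `x ∈ I = ker ε` is a `k`-linear combination of the elements `[g] - 1`. In characteristic
two, `([h] - 1)² = [2h] - 1`, and since every rational is twice a rational, each generator
`[g] - 1` is the square of an element of `I`, hence lies in `I²`.
-/

open CategoryTheory CategoryTheory.Limits

noncomputable section

/-- The group algebra `R = 𝔽₂[ℚ]` of the additive group `ℚ` over the field `𝔽₂ = ZMod 2`. -/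
abbrev GroupRingF2Q : Type := AddMonoidAlgebra (ZMod 2) ℚ

/-- The augmentation map `ε : 𝔽₂[ℚ] → 𝔽₂`, the `𝔽₂`-algebra homomorphism sending each
group element of `ℚ` to `1`, viewed as a ring homomorphism. -/
def augF2Q : GroupRingF2Q →+* ZMod 2 :=
  ((AddMonoidAlgebra.lift (ZMod 2) (ZMod 2) ℚ) 1).toRingHom

/-- `𝔽₂` regarded as a module over `R = 𝔽₂[ℚ]` via the augmentation `ε`. -/
instance : Module GroupRingF2Q (ZMod 2) := Module.compHom (ZMod 2) augF2Q

namespace AddMonoidAlgebra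

variable {k G : Type*} [CommRing k] [AddCommMonoid G]

lemma sub_algebraMap_lift_one_mem_span (x : k[G]) :
    x - algebraMap k k[G] (lift k k G 1 x) ∈ Ideal.span (Set.range fun g : G ↦ single g 1 - 1) := by
  induction x using induction_linear with
  | zero => simp
  | add x y hx hy =>
    rw [map_add, map_add, add_sub_add_comm]
    exact add_mem hx hy
  | single g c =>
    have : single g c - algebraMap k k[G] c = algebraMap k k[G] c * (single g 1 - 1) := by
      rw [mul_sub, mul_one, ← Algebra.smul_def, smul_single', mul_one]
    rw [lift_single, MonoidHom.one_apply, smul_eq_mul, mul_one, this]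
    exact Ideal.mul_mem_left _ _ (Ideal.subset_span ⟨g, rfl⟩)

lemma ker_lift_one_le_span :
    RingHom.ker (lift k k G 1) ≤ Ideal.span (Set.range fun g : G ↦ single g 1 - 1) := by
  intro x hx
  simpa [(RingHom.mem_ker).1 hx] using sub_algebraMap_lift_one_mem_span x

lemma single_sub_one_sq [CharP k 2] (g : G) :
    (single g 1 - 1 : k[G]) ^ 2 = single (g + g) 1 - 1 := by
  have two_eq_zero : (2 : k[G]) = 0 := by
    rw [← map_ofNat (algebraMap k k[G]) 2, CharTwo.two_eq_zero, map_zero]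
  have hsq : single (g + g) (1 : k) = single g 1 * single g 1 := by
    rw [single_mul_single, mul_one]
  rw [hsq]
  linear_combination (1 - single g 1) * two_eq_zero

theorem ker_lift_one_mul_self [CharP k 2] (hG : ∀ g : G, ∃ h, h + h = g) :
    RingHom.ker (lift k k G 1) * RingHom.ker (lift k k G 1) = RingHom.ker (lift k k G 1) := by
  refine le_antisymm Ideal.mul_le_left (ker_lift_one_le_span.trans (Ideal.span_le.2 ?_))
  rintro _ ⟨g, rfl⟩
  obtain ⟨h, rfl⟩ := hG g
  have hmem : single h 1 - 1 ∈ RingHom.ker (lift k k G 1) := by simp [RingHom.mem_ker]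
  show single (h + h) 1 - 1 ∈ _
  rw [← single_sub_one_sq, sq]
  exact Ideal.mul_mem_mul hmem hmem

end AddMonoidAlgebra

/-- The augmentation ideal `I = ker ε` of the group algebra `R = 𝔽₂[ℚ]` is idempotent:
`I² = I`. -/
theorem augmentationIdeal_idem :
    RingHom.ker augF2Q * RingHom.ker augF2Q = RingHom.ker augF2Q :=
  AddMonoidAlgebra.ker_lift_one_mul_self fun q ↦ ⟨q / 2, add_halves q⟩
end
end
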